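/- Let K ⊂ ℝⁿ be an n-dimensional convex polyhedron with minimal presentation {H₁,…,H_m}, such that K ⊂ {x_{n−1} ≤ 0}, H₁ = {x_{n−1} = 0}, and for each a ∈ ℝ^{n−1} the set K ∩ πₙ^{-1}(a,0) is bounded, where πₙ(x₁,…,xₙ) = (x₁,…,x_{n−1},0). Then the convex polyhedron K₁ := ⋂_{j=2}^m H_j⁺ also satisfies that K₁ ∩ πₙ^{-1}(a,0) is bounded for every a ∈ ℝ^{n−1}. -/

import Mathlib

/-! Each fiber of `K` is an interval cut out by the constraints whose last coefficient is
nonzero. Since the fibers of `K` are bounded and `K` is nonempty, some constraint has a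
positive and some constraint has a negative last coefficient. The constraint `H₁` has last
coefficient zero, so both survive in `K₁`, and they bound every fiber of `K₁` from above and
from below. -/

open Bornology

section Interval

variable {ι : Type*} (α β c : ι → ℝ)

theorem exists_pos_coeff_of_bddAbove {t₀ : ℝ} (ht₀ : ∀ i, α i + β i * t₀ ≤ c i)
    (hbdd : BddAbove {t : ℝ | ∀ i, α i + β i * t ≤ c i}) : ∃ i, 0 < β i := by
  by_contra! hβ
  refine not_bddAbove_Ici t₀ (hbdd.mono ?_)
  intro t (ht : t₀ ≤ t) i
  nlinarith [ht₀ i, hβ i]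

theorem exists_neg_coeff_of_bddBelow {t₀ : ℝ} (ht₀ : ∀ i, α i + β i * t₀ ≤ c i)
    (hbdd : BddBelow {t : ℝ | ∀ i, α i + β i * t ≤ c i}) : ∃ i, β i < 0 := by
  by_contra! hβ
  refine not_bddBelow_Iic t₀ (hbdd.mono ?_)
  intro t (ht : t ≤ t₀) i
  nlinarith [ht₀ i, hβ i]

theorem isBounded_of_pos_coeff_of_neg_coeff (p : ι → Prop) {i k : ι} (hpi : p i) (hpk : p k)
    (hi : 0 < β i) (hk : β k < 0) :
    IsBounded {t : ℝ | ∀ j, p j → α j + β j * t ≤ c j} := by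
  refine (Metric.isBounded_Icc ((c k - α k) / β k) ((c i - α i) / β i)).subset fun t ht => ?_
  have hti := ht i hpi
  have htk := ht k hpk
  constructor
  · rw [div_le_iff_of_neg hk]; linarith
  · rw [le_div_iff₀ hi]; linarith

end Interval

theorem sum_mul_snoc {n : ℕ} (w : Fin (n + 1) → ℝ) (a : Fin n → ℝ) (t : ℝ) :
    ∑ j, w j * (Fin.snoc a t : Fin (n + 1) → ℝ) j
      = ∑ j : Fin n, w j.castSucc * a j + w (Fin.last n) * t := by
  simp [Fin.sum_univ_castSucc]

/-- Coordinates in ℝ^{n+2}: x_{n−1} is index n (penultimate), xₙ the last; H₁ is constraint 0. -/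
theorem stmt_14 (n m : ℕ) (u : Fin (m + 1) → Fin (n + 2) → ℝ) (c : Fin (m + 1) → ℝ)
    (K : Set (Fin (n + 2) → ℝ))
    (hK : K = {x | ∀ i, ∑ j, u i j * x j ≤ c i})
    (hdim : (interior K).Nonempty)
    (h0 : u 0 = Pi.single ⟨n, by omega⟩ 1)
    (hbdd : ∀ a : Fin (n + 1) → ℝ, Bornology.IsBounded {t : ℝ | Fin.snoc a t ∈ K}) :
    ∀ a : Fin (n + 1) → ℝ,
      Bornology.IsBounded
        {t : ℝ | ∀ i, i ≠ 0 → ∑ j, u i j * (Fin.snoc a t : Fin (n + 2) → ℝ) j ≤ c i} := by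
  intro a
  simp only [sum_mul_snoc]
  obtain ⟨x, hx⟩ := hdim
  have hfiber : {t : ℝ | Fin.snoc (Fin.init x) t ∈ K} = {t : ℝ | ∀ i,
      ∑ j, u i j.castSucc * Fin.init x j + u i (Fin.last _) * t ≤ c i} := by
    simp only [hK, Set.mem_ofPred_eq, sum_mul_snoc]
  have hxK : x (Fin.last _) ∈ {t : ℝ | Fin.snoc (Fin.init x) t ∈ K} := by
    simpa only [Set.mem_ofPred_eq, Fin.snoc_init_self] using interior_subset hx
  rw [hfiber] at hxK
  obtain ⟨i, hi⟩ := exists_pos_coeff_of_bddAbove _ _ _ hxK (hfiber ▸ hbdd (Fin.init x)).bddAbove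
  obtain ⟨k, hk⟩ := exists_neg_coeff_of_bddBelow _ _ _ hxK (hfiber ▸ hbdd (Fin.init x)).bddBelow
  have hu0 : u 0 (Fin.last _) = 0 := by
    rw [h0]
    exact Pi.single_eq_of_ne (by simp [Fin.ext_iff]) 1
  exact isBounded_of_pos_coeff_of_neg_coeff _ _ _ _ (by rintro rfl; exact hi.ne' hu0)
    (by rintro rfl; exact hk.ne hu0) hi hk
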